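/- Let V be a normed space and δu : [t₀, ∞) → V be differentiable with ‖(d/dt)δu(t)‖-growth controlled by [δu(t), (d/dt)δu(t)] ≤ λ(t)·‖δu(t)‖² for an integrable function λ. Then ‖δu(t)‖ ≤ exp(∫_{t₀}^t λ(s) ds) · ‖δu(t₀)‖ for all t ≥ t₀. -/

import Mathlib

/-!
Because the norm is 1-Lipschitz, `‖δu (s + h)‖ = ‖δu s + h • δu' s‖ + o(h)`, so the right
derivative of `‖δu‖` is the one-sided directional derivative `L` of the norm. Where `‖δu‖ > 0`,
`log ‖δu‖` therefore has right derivative `L / ‖δu‖ ≤ λ`, and integrating gives the bound.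
Zeros are handled from the last zero `τ ≤ t`: letting `c ↓ τ` in the bound on `[c, t]` yields
`‖δu t‖ ≤ exp (∫_τ^t λ) * ‖δu τ‖ = 0`.
-/

open Filter MeasureTheory Set Asymptotics Topology

theorem LipschitzWith.hasDerivWithinAt_Ioi_comp {E : Type*} [NormedAddCommGroup E]
    [NormedSpace ℝ E] {G : E → ℝ} {K : NNReal} (hG : LipschitzWith K G) {f : ℝ → E} {v : E}
    {s L : ℝ} (hf : HasDerivWithinAt f v (Ioi s) s)
    (hGv : HasDerivWithinAt (fun h : ℝ => G (f s + h • v)) L (Ioi 0) 0) :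
    HasDerivWithinAt (fun z => G (f z)) L (Ioi s) s := by
  have hshift : HasDerivWithinAt (fun z => G (f s + (z - s) • v)) L (Ioi s) s := by
    have hsub : HasDerivWithinAt (fun z : ℝ => z - s) 1 (Ioi s) s :=
      ((hasDerivAt_id s).sub_const s).hasDerivWithinAt
    have := hGv.comp_of_eq s hsub (fun _ hz => sub_pos.2 (mem_Ioi.1 hz)) (sub_self s).symm
    rwa [mul_one] at this
  have hclose : (fun z => G (f z) - G (f s + (z - s) • v)) =o[𝓝[>] s] fun z => z - s := by
    refine IsBigO.trans_isLittleO (isBigO_of_le' (c := K) _ fun z => ?_) hf.isLittleO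
    rw [Real.norm_eq_abs, ← Real.dist_eq, sub_sub, ← dist_eq_norm]
    exact hG.dist_le_mul _ _
  refine HasDerivWithinAt.of_isLittleO ((hshift.isLittleO.add hclose).congr_left fun z => ?_)
  simp only [sub_self, zero_smul, add_zero]
  ring

section Gronwall

variable {g lam : ℝ → ℝ} {a b : ℝ}

theorem le_exp_integral_mul_of_forall_Icc_pos (hab : a ≤ b) (hg : ContinuousOn g (Icc a b))
    (hpos : ∀ x ∈ Icc a b, 0 < g x)
    (hderiv : ∀ x ∈ Ioo a b, 0 < g x → ∃ D, HasDerivWithinAt g D (Ioi x) x ∧ D ≤ lam x * g x)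
    (hlam : IntegrableOn lam (Icc a b)) :
    g b ≤ Real.exp (∫ x in a..b, lam x) * g a := by
  have hlog : ∀ x ∈ Ioo a b,
      ∃ D, HasDerivWithinAt (fun y => Real.log (g y)) D (Ioi x) x ∧ D ≤ lam x := by
    intro x hx
    have hgx := hpos x (Ioo_subset_Icc_self hx)
    obtain ⟨D, hD, hDle⟩ := hderiv x hx hgx
    exact ⟨(g x)⁻¹ * D, (Real.hasDerivAt_log hgx.ne').comp_hasDerivWithinAt x hD,
      (inv_mul_le_iff₀ hgx).2 (by linarith)⟩
  have hlog_le : Real.log (g b) - Real.log (g a) ≤ ∫ x in a..b, lam x := by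
    refine intervalIntegral.sub_le_integral_of_hasDeriv_right_of_le hab
      (hg.log fun x hx => (hpos x hx).ne')
      (fun x hx => (hlog x hx).choose_spec.1.differentiableWithinAt.hasDerivWithinAt) hlam
      fun x hx => ?_
    obtain ⟨D, hD, hDle⟩ := hlog x hx
    rwa [hD.derivWithin (uniqueDiffWithinAt_Ioi x)]
  calc g b = Real.exp (Real.log (g b)) := (Real.exp_log (hpos b (right_mem_Icc.2 hab))).symm
    _ ≤ Real.exp ((∫ x in a..b, lam x) + Real.log (g a)) := Real.exp_le_exp.2 (by linarith)
    _ = Real.exp (∫ x in a..b, lam x) * g a := by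
      rw [Real.exp_add, Real.exp_log (hpos a (left_mem_Icc.2 hab))]

theorem le_exp_integral_mul_of_forall_Ioc_pos (hab : a ≤ b) (hg : ContinuousOn g (Icc a b))
    (hpos : ∀ x ∈ Ioc a b, 0 < g x)
    (hderiv : ∀ x ∈ Ioo a b, 0 < g x → ∃ D, HasDerivWithinAt g D (Ioi x) x ∧ D ≤ lam x * g x)
    (hlam : IntegrableOn lam (Icc a b)) :
    g b ≤ Real.exp (∫ x in a..b, lam x) * g a := by
  obtain rfl | hlt := hab.eq_or_lt
  · simp
  have hcont : ContinuousWithinAt (fun c => Real.exp (∫ x in c..b, lam x) * g c) (Ioi a) a := by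
    have hprim := intervalIntegral.continuousOn_primitive_interval_left (uIcc_of_le hab ▸ hlam)
    rw [uIcc_of_le hab] at hprim
    exact ((hprim.rexp.mul hg) a (left_mem_Icc.2 hab)).mono_of_mem_nhdsWithin
      (Icc_mem_nhdsGT hlt)
  refine ge_of_tendsto hcont.tendsto ?_
  filter_upwards [Ioc_mem_nhdsGT hlt] with c hc
  exact le_exp_integral_mul_of_forall_Icc_pos hc.2 (hg.mono (Icc_subset_Icc_left hc.1.le))
    (fun x hx => hpos x ⟨hc.1.trans_le hx.1, hx.2⟩)
    (fun x hx => hderiv x ⟨hc.1.trans hx.1, hx.2⟩)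
    (hlam.mono_set (Icc_subset_Icc_left hc.1.le))

theorem le_exp_integral_mul_of_nonneg (hab : a ≤ b) (hg : ContinuousOn g (Icc a b))
    (hg₀ : ∀ x ∈ Icc a b, 0 ≤ g x)
    (hderiv : ∀ x ∈ Ioo a b, 0 < g x → ∃ D, HasDerivWithinAt g D (Ioi x) x ∧ D ≤ lam x * g x)
    (hlam : IntegrableOn lam (Icc a b)) :
    g b ≤ Real.exp (∫ x in a..b, lam x) * g a := by
  -- `τ` is the last zero of `g` in `[a, b]`, or `a` if there is none.
  set A := insert a (Icc a b ∩ g ⁻¹' {0})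
  have hA : IsCompact A := (isCompact_Icc.of_isClosed_subset
    (hg.preimage_isClosed_of_isClosed isClosed_Icc isClosed_singleton) inter_subset_left).insert a
  obtain ⟨τ, hτA, hτmax⟩ := hA.exists_isGreatest (insert_nonempty _ _)
  have hτ : τ ∈ Icc a b := by
    rcases hτA with rfl | ⟨hτ, -⟩
    exacts [left_mem_Icc.2 hab, hτ]
  have hpos : ∀ x ∈ Ioc τ b, 0 < g x := fun x hx =>
    (hg₀ x ⟨hτ.1.trans hx.1.le, hx.2⟩).lt_of_ne' fun hx₀ =>
      hx.1.not_ge (hτmax (mem_insert_of_mem _ ⟨⟨hτ.1.trans hx.1.le, hx.2⟩, hx₀⟩))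
  have hbound := le_exp_integral_mul_of_forall_Ioc_pos hτ.2 (hg.mono (Icc_subset_Icc_left hτ.1))
    hpos (fun x hx => hderiv x ⟨hτ.1.trans_lt hx.1, hx.2⟩)
    (hlam.mono_set (Icc_subset_Icc_left hτ.1))
  rcases hτA with rfl | ⟨-, hτ₀⟩
  · exact hbound
  · rw [show g τ = 0 from hτ₀, mul_zero] at hbound
    exact hbound.trans (mul_nonneg (Real.exp_pos _).le (hg₀ a (left_mem_Icc.2 hab)))

end Gronwall

/-- Growth of perturbations: if the semi-inner product `[δu(t), δu'(t)]` is bounded by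
`λ(t) ‖δu(t)‖²`, then `‖δu(t)‖ ≤ exp (∫_{t₀}^t λ) ‖δu(t₀)‖`. -/
theorem growth_bound {V : Type*} [NormedAddCommGroup V] [NormedSpace ℝ V]
    (t₀ : ℝ) (δu δu' : ℝ → V) (lam : ℝ → ℝ)
    (hderiv : ∀ t, t₀ ≤ t → HasDerivAt δu (δu' t) t)
    (hint : ∀ t, t₀ ≤ t → IntervalIntegrable lam volume t₀ t)
    (hsip : ∀ t, t₀ ≤ t → ∃ L : ℝ,
      Tendsto (fun h : ℝ => (‖δu t + h • δu' t‖ - ‖δu t‖) / h)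
        (nhdsWithin 0 (Set.Ioi 0)) (nhds L) ∧
      ‖δu t‖ * L ≤ lam t * ‖δu t‖ ^ 2) :
    ∀ t, t₀ ≤ t → ‖δu t‖ ≤ Real.exp (∫ s in t₀..t, lam s) * ‖δu t₀‖ := by
  intro t ht
  refine le_exp_integral_mul_of_nonneg ht
    (fun x hx => (hderiv x hx.1).continuousAt.norm.continuousWithinAt) (fun _ _ => norm_nonneg _)
    (fun x hx hpos => ?_) ((intervalIntegrable_iff_integrableOn_Icc_of_le ht).1 (hint t ht))
  obtain ⟨L, hL, hLle⟩ := hsip x hx.1.le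
  have hnorm_dir : HasDerivWithinAt (fun h : ℝ => ‖δu x + h • δu' x‖) L (Ioi 0) 0 := by
    rw [hasDerivWithinAt_iff_tendsto_slope' self_notMem_Ioi]
    refine hL.congr fun h => ?_
    simp [slope_def_field]
  refine ⟨L, lipschitzWith_one_norm.hasDerivWithinAt_Ioi_comp
    (hderiv x hx.1.le).hasDerivWithinAt hnorm_dir, le_of_mul_le_mul_left ?_ hpos⟩
  linarith
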